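/- arXiv:2602.07832 — 2 statements merged into one kernel-verified Lean document; each statement's English description precedes it below -/
import Mathlib

section
/- Let Ω be a finite set, D (data) and π (policy) two strictly positive probability distributions on Ω, and p̃ : Ω → ℝ a strictly positive unnormalized density. Define the discriminator D*(τ) = p̃(τ)/(p̃(τ) + π(τ)). Then the following gradient identity holds: for any direction g : Ω → ℝ and p̃_t(τ) = p̃(τ)·exp(t·g(τ)), the derivative at t = 0 of t ↦ ∑_τ D(τ)·log(p̃_t(τ)/(p̃_t(τ)+π(τ))) + ∑_τ π(τ)·log(π(τ)/(p̃_t(τ)+π(τ))) equals ∑_τ D(τ)·g(τ) - ∑_τ (D(τ)+π(τ))·(p̃(τ)/(p̃(τ)+π(τ)))·g(τ). -/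
open Real Finset

theorem discriminator_objective_gradient
    (Ω : Type*) [Fintype Ω] [Nonempty Ω]
    (D pol : Ω → ℝ)
    (hDpos : ∀ τ, 0 < D τ) (hDsum : ∑ τ : Ω, D τ = 1)
    (hpolpos : ∀ τ, 0 < pol τ) (hpolsum : ∑ τ : Ω, pol τ = 1)
    (ptil : Ω → ℝ) (hppos : ∀ τ, 0 < ptil τ)
    (g : Ω → ℝ) :
    HasDerivAt
      (fun t : ℝ =>
        (∑ τ : Ω, D τ * Real.log ((ptil τ * Real.exp (t * g τ)) /
            (ptil τ * Real.exp (t * g τ) + pol τ))) +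
        ∑ τ : Ω, pol τ * Real.log (pol τ / (ptil τ * Real.exp (t * g τ) + pol τ)))
      ((∑ τ : Ω, D τ * g τ) -
        ∑ τ : Ω, (D τ + pol τ) * (ptil τ / (ptil τ + pol τ)) * g τ) 0 := by
  have key : ∀ τ : Ω, HasDerivAt
      (fun t : ℝ => D τ * Real.log ((ptil τ * Real.exp (t * g τ)) /
          (ptil τ * Real.exp (t * g τ) + pol τ)) +
        pol τ * Real.log (pol τ / (ptil τ * Real.exp (t * g τ) + pol τ)))
      (D τ * g τ - (D τ + pol τ) * (ptil τ / (ptil τ + pol τ)) * g τ) 0 := by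
    intro τ
    have hp := hppos τ
    have hq := hpolpos τ
    have hupos : ∀ t : ℝ, 0 < ptil τ * Real.exp (t * g τ) :=
      fun t => mul_pos hp (Real.exp_pos _)
    have hvpos : ∀ t : ℝ, 0 < ptil τ * Real.exp (t * g τ) + pol τ :=
      fun t => add_pos (hupos t) hq
    have hu : HasDerivAt (fun t : ℝ => ptil τ * Real.exp (t * g τ)) (ptil τ * g τ) 0 := by
      have h1 : HasDerivAt (fun t : ℝ => t * g τ) (g τ) 0 := by
        simpa using (hasDerivAt_id (0 : ℝ)).mul_const (g τ)
      simpa [Real.exp_zero] using (h1.exp.const_mul (ptil τ))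
    have hv : HasDerivAt (fun t : ℝ => ptil τ * Real.exp (t * g τ) + pol τ)
        (ptil τ * g τ) 0 := hu.add_const _
    have hlogu : HasDerivAt (fun t : ℝ => Real.log (ptil τ * Real.exp (t * g τ))) (g τ) 0 := by
      have := hu.log (ne_of_gt (hupos 0))
      have hne : ptil τ ≠ 0 := ne_of_gt hp
      field_simp [Real.exp_zero] at this
      simpa using this
    have hlogv : HasDerivAt (fun t : ℝ => Real.log (ptil τ * Real.exp (t * g τ) + pol τ))
        (ptil τ * g τ / (ptil τ + pol τ)) 0 := by
      have := hv.log (ne_of_gt (hvpos 0))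
      simpa [Real.exp_zero] using this
    have hfun : (fun t : ℝ => D τ * Real.log ((ptil τ * Real.exp (t * g τ)) /
          (ptil τ * Real.exp (t * g τ) + pol τ)) +
        pol τ * Real.log (pol τ / (ptil τ * Real.exp (t * g τ) + pol τ)))
        = fun t : ℝ => D τ * (Real.log (ptil τ * Real.exp (t * g τ)) -
            Real.log (ptil τ * Real.exp (t * g τ) + pol τ)) +
          pol τ * (Real.log (pol τ) - Real.log (ptil τ * Real.exp (t * g τ) + pol τ)) := by
      funext t
      rw [Real.log_div (ne_of_gt (hupos t)) (ne_of_gt (hvpos t)),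
        Real.log_div (ne_of_gt hq) (ne_of_gt (hvpos t))]
    rw [hfun]
    have hD : HasDerivAt (fun t : ℝ => D τ * (Real.log (ptil τ * Real.exp (t * g τ)) -
        Real.log (ptil τ * Real.exp (t * g τ) + pol τ)))
        (D τ * (g τ - ptil τ * g τ / (ptil τ + pol τ))) 0 :=
      (hlogu.sub hlogv).const_mul _
    have hP : HasDerivAt (fun t : ℝ => pol τ * (Real.log (pol τ) -
        Real.log (ptil τ * Real.exp (t * g τ) + pol τ)))
        (pol τ * (0 - ptil τ * g τ / (ptil τ + pol τ))) 0 :=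
      ((hasDerivAt_const 0 (Real.log (pol τ))).sub hlogv).const_mul _
    have := hD.fun_add hP
    refine this.congr_deriv ?_
    have hvne : ptil τ + pol τ ≠ 0 := ne_of_gt (add_pos hp hq)
    ring
  have H : HasDerivAt (fun t : ℝ => ∑ τ : Ω,
      (D τ * Real.log ((ptil τ * Real.exp (t * g τ)) /
          (ptil τ * Real.exp (t * g τ) + pol τ)) +
        pol τ * Real.log (pol τ / (ptil τ * Real.exp (t * g τ) + pol τ))))
      (∑ τ : Ω, (D τ * g τ - (D τ + pol τ) * (ptil τ / (ptil τ + pol τ)) * g τ)) 0 :=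
    HasDerivAt.fun_sum fun τ _ => key τ
  convert H using 1
  · funext t
    rw [Finset.sum_add_distrib]
  · rw [Finset.sum_sub_distrib]
end

section
/- Let A be a finite set, π_ref a strictly positive probability distribution on A, β > 0, and r : A → ℝ. Suppose π* is the DPO-optimal policy π*(a) = π_ref(a)·exp(r(a)/β)/Z with Z = ∑_{a'} π_ref(a')·exp(r(a')/β). Then for any two actions a, b ∈ A, the reward difference satisfies the partition-function-free identity r(a) - r(b) = β·(log(π*(a)/π_ref(a)) - log(π*(b)/π_ref(b))); consequently, the Bradley-Terry preference probability σ(r(a)-r(b)) = 1/(1+exp(-(r(a)-r(b)))) can be expressed purely in terms of policy log-ratios. -/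
open Real Finset

/-!
Taking logarithms in `π*(a) = π_ref(a) exp(r(a)/β) / Z` gives
`log (π*(a) / π_ref(a)) = r(a)/β - log Z`, so the normaliser `log Z` cancels in the difference
of two log-ratios; the Bradley–Terry probability depends only on `r(a) - r(b)`.
-/

lemma Real.log_mul_exp_div_div_self {p Z : ℝ} (hp : p ≠ 0) (hZ : Z ≠ 0) (x : ℝ) :
    log (p * exp x / Z / p) = x - log Z := by
  rw [mul_div_assoc, mul_div_cancel_left₀ _ hp, log_div (exp_ne_zero x) hZ, log_exp]

lemma sum_mul_exp_pos {A : Type*} [Fintype A] [Nonempty A] {w : A → ℝ} (hw : ∀ a, 0 < w a)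
    (f : A → ℝ) : 0 < ∑ a, w a * exp (f a) :=
  sum_pos (fun a _ => mul_pos (hw a) (exp_pos _)) univ_nonempty

lemma sub_eq_mul_sub_log_div_of_eq_mul_exp_div {A : Type*} {r πref πstar : A → ℝ} {β Z : ℝ}
    (hβ : β ≠ 0) (hZ : Z ≠ 0) (hπref : ∀ a, πref a ≠ 0)
    (hπstar : ∀ a, πstar a = πref a * exp (r a / β) / Z) (a b : A) :
    r a - r b = β * (log (πstar a / πref a) - log (πstar b / πref b)) := by
  simp only [hπstar, log_mul_exp_div_div_self (hπref _) hZ]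
  field_simp
  ring

theorem dpo_reward_difference_identity_general
    (A : Type*) [Fintype A] (r : A → ℝ) (β : ℝ) (hβ : 0 < β)
    (πref : A → ℝ) (hrefpos : ∀ a, 0 < πref a)
    (Z : ℝ) (hZ : Z = ∑ a' : A, πref a' * Real.exp (r a' / β))
    (πstar : A → ℝ) (hπstar : ∀ a, πstar a = πref a * Real.exp (r a / β) / Z)
    (a b : A) :
    (r a - r b
      = β * (Real.log (πstar a / πref a) - Real.log (πstar b / πref b))) ∧
    (1 / (1 + Real.exp (-(r a - r b)))
      = 1 / (1 + Real.exp (-(β * (Real.log (πstar a / πref a)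
          - Real.log (πstar b / πref b)))))) := by
  have : Nonempty A := ⟨a⟩
  have hZpos : 0 < Z := hZ ▸ sum_mul_exp_pos hrefpos _
  have hdiff := sub_eq_mul_sub_log_div_of_eq_mul_exp_div hβ.ne' hZpos.ne'
    (fun c => (hrefpos c).ne') hπstar a b
  exact ⟨hdiff, by rw [hdiff]⟩

theorem dpo_reward_difference_identity
    (A : Type*) [Fintype A] [Nonempty A] (r : A → ℝ) (β : ℝ) (hβ : 0 < β)
    (πref : A → ℝ) (hrefpos : ∀ a, 0 < πref a) (hrefsum : ∑ a : A, πref a = 1)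
    (Z : ℝ) (hZ : Z = ∑ a' : A, πref a' * Real.exp (r a' / β))
    (πstar : A → ℝ) (hπstar : ∀ a, πstar a = πref a * Real.exp (r a / β) / Z)
    (a b : A) :
    (r a - r b
      = β * (Real.log (πstar a / πref a) - Real.log (πstar b / πref b))) ∧
    (1 / (1 + Real.exp (-(r a - r b)))
      = 1 / (1 + Real.exp (-(β * (Real.log (πstar a / πref a)
          - Real.log (πstar b / πref b)))))) :=
  dpo_reward_difference_identity_general A r β hβ πref hrefpos Z hZ πstar hπstar a b
end
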